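/- arXiv:1501.04362 — 3 statements merged into one kernel-verified Lean document; each statement's English description precedes it below -/
import Mathlib

section
/- Let U be a metric space, V a separable metric space, and F : U × V → ℝ lower semicontinuous and bounded. Then for every ε > 0 there exists a Borel-measurable map φ_ε : U → V such that F(u, φ_ε(u)) ≥ sup_{v∈V} F(u,v) − ε for all u ∈ U. -/
/-!
Fix a dense sequence `v` in `V`. Since `F(u, ·)` is lower semicontinuous, its supremum over `V`
equals its supremum over the sequence, which is a Borel function of `u` as a countable supremum of
the lower semicontinuous functions `u ↦ F(u, v n)`. Choosing for each `u` the first index `n` with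
`F(u, v n) > sup - ε` is then a Borel map `U → ℕ`, and composing it with `v` gives `φ_ε`.
-/

open Set

theorem LowerSemicontinuous.iSup_le_iSup_comp_of_denseRange {Y ι : Type*} [TopologicalSpace Y]
    [Nonempty Y] {f : Y → ℝ} (hf : LowerSemicontinuous f) {v : ι → Y} (hv : DenseRange v)
    (hb : BddAbove (range (f ∘ v))) : ⨆ y, f y ≤ ⨆ i, f (v i) := by
  refine ciSup_le fun y => not_lt.1 fun hy => ?_
  obtain ⟨i, hi⟩ := hv.exists_mem_open (hf.isOpen_preimage _) ⟨y, hy⟩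
  exact (le_ciSup hb i).not_gt hi

theorem exists_measurable_index_iSup_sub_lt {α : Type*} [MeasurableSpace α] {g : ℕ → α → ℝ}
    (hg : ∀ n, Measurable (g n)) {ε : ℝ} (hε : 0 < ε) :
    ∃ N : α → ℕ, Measurable N ∧ ∀ x, (⨆ n, g n x) - ε < g (N x) x := by
  classical
  have hex : ∀ x, ∃ n, (⨆ n, g n x) - ε < g n x := fun x =>
    exists_lt_of_lt_ciSup (sub_lt_self _ hε)
  refine ⟨fun x => Nat.find (hex x), measurable_find hex fun n => ?_, fun x => Nat.find_spec (hex x)⟩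
  exact measurableSet_lt ((Measurable.iSup hg).sub_const ε) (hg n)

theorem stmt_5_general {U V : Type*} [MetricSpace U] [MetricSpace V]
    [TopologicalSpace.SeparableSpace V] [Nonempty V]
    [MeasurableSpace U] [BorelSpace U] [MeasurableSpace V]
    (F : U × V → ℝ) (hF : LowerSemicontinuous F) (C : ℝ)
    (hbdd : ∀ p, |F p| ≤ C) (ε : ℝ) (hε : 0 < ε) :
    ∃ φ : U → V, Measurable φ ∧ ∀ u, F (u, φ u) ≥ (⨆ v, F (u, v)) - ε := by
  obtain ⟨v, hv⟩ := TopologicalSpace.exists_dense_seq V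
  have hsection : ∀ u, LowerSemicontinuous fun w => F (u, w) := fun u =>
    hF.comp (continuous_const.prodMk continuous_id)
  have hbdd_above : ∀ u, BddAbove (range fun n => F (u, v n)) := fun u =>
    ⟨C, forall_mem_range.2 fun n => (abs_le.1 (hbdd _)).2⟩
  obtain ⟨N, hN, hNsup⟩ := exists_measurable_index_iSup_sub_lt (g := fun n u => F (u, v n))
    (fun n => (hF.comp (continuous_id.prodMk continuous_const)).measurable) hε
  refine ⟨v ∘ N, measurable_from_nat.comp hN, fun u => ?_⟩
  have hsup := (hsection u).iSup_le_iSup_comp_of_denseRange hv (hbdd_above u)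
  exact (sub_le_sub_right hsup ε).trans (hNsup u).le

theorem stmt_5 {U V : Type*} [MetricSpace U] [MetricSpace V]
    [TopologicalSpace.SeparableSpace V] [Nonempty V]
    [MeasurableSpace U] [BorelSpace U] [MeasurableSpace V] [BorelSpace V]
    (F : U × V → ℝ) (hF : LowerSemicontinuous F) (C : ℝ)
    (hbdd : ∀ p, |F p| ≤ C) (ε : ℝ) (hε : 0 < ε) :
    ∃ φ : U → V, Measurable φ ∧ ∀ u, F (u, φ u) ≥ (⨆ v, F (u, v)) - ε :=
  stmt_5_general F hF C hbdd ε hε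
end

section
/- Let U be a metric space, V a compact metric space, and F : U × V → ℝ upper semicontinuous and bounded. Then F*(u) := sup_{v∈V} F(u,v) is upper semicontinuous and bounded on U, and there exists a Borel-measurable map φ : U → V with F(u, φ(u)) = F*(u) for all u ∈ U. -/
/-!
The supremum `F* u` over the compact space `V` is attained, and it is upper semicontinuous by the
tube lemma: if `F (u, ·) < c` on `V`, then `F < c` on `W × V` for a neighbourhood `W` of `u`.
The argmax sets `M u = {v | F* u ≤ F (u, v)}` are closed, and `M u` meets a closed `K` iff
`F* u ≤ max_K F (u, ·)`, a measurable condition on `u` since both sides are upper semicontinuous.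
A measurable selection of such a map is built as in the Kuratowski–Ryll-Nardzewski theorem: fix a
dense sequence `z`; at stage `n` intersect the current cell with the first closed ball
`closedBall (z i) (2⁻ⁿ)` that still meets `M u`. The nested cells shrink to a point of `M u`, which
is the limit of the centres `z i` chosen, and these depend measurably on `u`.
-/

open Set Metric Filter Topology

lemma measurable_sInf_nat {U : Type*} [MeasurableSpace U] {S : U → Set ℕ}
    (hS : ∀ i, MeasurableSet {u | i ∈ S u}) : Measurable fun u => sInf (S u) := by
  classical
  -- Adding every index when `S u = ∅` changes neither `sInf` (as `sInf ∅ = 0`) nor measurability.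
  have hT : ∀ u, ∃ i, i ∈ S u ∨ S u = ∅ := fun u =>
    (S u).eq_empty_or_nonempty.elim (fun h => ⟨0, Or.inr h⟩) fun ⟨i, hi⟩ => ⟨i, Or.inl hi⟩
  have hsInf : (fun u => sInf (S u)) = fun u => Nat.find (hT u) := by
    funext u
    rcases (S u).eq_empty_or_nonempty with h | h
    · rw [(Nat.find_eq_zero (hT u)).2 (Or.inr h), h, Nat.sInf_empty]
    · rw [Nat.sInf_def h]
      simp [h.ne_empty]
  rw [hsInf]
  refine measurable_find hT fun i => (hS i).union (?_ : MeasurableSet {u | S u = ∅})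
  have hempty : {u | S u = ∅} = ⋂ j, {u | j ∈ S u}ᶜ := by
    ext u
    simp [eq_empty_iff_forall_notMem]
  exact hempty ▸ MeasurableSet.iInter fun j => (hS j).compl

section SectionSup

variable {U V : Type*} {F : U × V → ℝ} {K : Set V}

noncomputable def sectionSup (F : U × V → ℝ) (K : Set V) (u : U) : ℝ :=
  sSup ((fun v => F (u, v)) '' K)

lemma IsMaxOn.sectionSup_eq {u : U} {v : V} (hv : v ∈ K) (h : IsMaxOn (fun v => F (u, v)) K v) :
    sectionSup F K u = F (u, v) :=
  (h.isLUB hv).csSup_eq ⟨_, mem_image_of_mem _ hv⟩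

variable [TopologicalSpace U] [TopologicalSpace V]

lemma UpperSemicontinuous.exists_isMaxOn_section (hF : UpperSemicontinuous F) (hK : IsCompact K)
    (hne : K.Nonempty) (u : U) : ∃ v ∈ K, IsMaxOn (fun v => F (u, v)) K v :=
  UpperSemicontinuousOn.exists_isMaxOn hne hK
    ((hF.comp (Continuous.prodMk_right u)).upperSemicontinuousOn K)

lemma UpperSemicontinuous.le_sectionSup (hF : UpperSemicontinuous F) (hK : IsCompact K) (u : U)
    {v : V} (hv : v ∈ K) : F (u, v) ≤ sectionSup F K u := by
  obtain ⟨w, hw, hmax⟩ := hF.exists_isMaxOn_section hK ⟨v, hv⟩ u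
  exact (hmax.sectionSup_eq hw).symm ▸ hmax hv

lemma UpperSemicontinuous.upperSemicontinuous_sectionSup (hF : UpperSemicontinuous F)
    (hK : IsCompact K) (hne : K.Nonempty) : UpperSemicontinuous (sectionSup F K) := by
  intro u c hc
  have hnear : ∀ᶠ u' in 𝓝 u, ∀ v ∈ K, F (u', v) < c :=
    hK.eventually_forall_of_forall_eventually fun v hv =>
      hF (u, v) c ((hF.le_sectionSup hK u hv).trans_lt hc)
  filter_upwards [hnear] with u' hu'
  obtain ⟨v, hv, hmax⟩ := hF.exists_isMaxOn_section hK hne u'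
  exact (hmax.sectionSup_eq hv).symm ▸ hu' v hv

lemma UpperSemicontinuous.argmax_inter_nonempty_iff [CompactSpace V] (hF : UpperSemicontinuous F)
    (hK : IsClosed K) (hne : K.Nonempty) (u : U) :
    ({v | sectionSup F univ u ≤ F (u, v)} ∩ K).Nonempty ↔
      sectionSup F univ u ≤ sectionSup F K u := by
  constructor
  · rintro ⟨v, hmax, hv⟩
    exact hmax.trans (hF.le_sectionSup hK.isCompact u hv)
  · intro hle
    obtain ⟨v, hv, hmax⟩ := hF.exists_isMaxOn_section hK.isCompact hne u
    exact ⟨v, hle.trans (hmax.sectionSup_eq hv).le, hv⟩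

lemma UpperSemicontinuous.measurableSet_argmax_inter_nonempty [CompactSpace V] [MeasurableSpace U]
    [OpensMeasurableSpace U] (hF : UpperSemicontinuous F) (hK : IsClosed K) :
    MeasurableSet {u | ({v | sectionSup F univ u ≤ F (u, v)} ∩ K).Nonempty} := by
  rcases K.eq_empty_or_nonempty with rfl | hne
  · simp
  have : Nonempty V := hne.to_type
  simp_rw [hF.argmax_inter_nonempty_iff hK hne]
  exact measurableSet_le
    (hF.upperSemicontinuous_sectionSup isCompact_univ univ_nonempty).measurable
    (hF.upperSemicontinuous_sectionSup hK.isCompact hne).measurable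

end SectionSup

namespace MeasurableSelection

variable {U V : Type*} [MetricSpace V]

def dyadicCell (z : ℕ → V) {n : ℕ} (σ : Fin n → ℕ) : Set V :=
  ⋂ m : Fin n, closedBall (z (σ m)) ((1 / 2) ^ (m : ℕ))

lemma isClosed_dyadicCell (z : ℕ → V) {n : ℕ} (σ : Fin n → ℕ) : IsClosed (dyadicCell z σ) :=
  isClosed_iInter fun _ => isClosed_closedBall

lemma dyadicCell_snoc (z : ℕ → V) {n : ℕ} (σ : Fin n → ℕ) (i : ℕ) :
    dyadicCell z (Fin.snoc σ i : Fin (n + 1) → ℕ) =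
      dyadicCell z σ ∩ closedBall (z i) ((1 / 2) ^ n) := by
  ext v
  simp [dyadicCell, Fin.forall_fin_succ']

noncomputable def firstHit (M : U → Set V) (z : ℕ → V) (n : ℕ) (K : Set V) (u : U) : ℕ :=
  sInf {i | (M u ∩ (K ∩ closedBall (z i) ((1 / 2) ^ n))).Nonempty}

-- `code M z n u` lists the indices of the balls chosen at stages `0, …, n - 1`; its values lie in
-- the countable type `Fin n → ℕ`, which is what lets measurability pass from one stage to the next.
noncomputable def code (M : U → Set V) (z : ℕ → V) : (n : ℕ) → U → Fin n → ℕ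
  | 0, _ => Fin.elim0
  | n + 1, u => Fin.snoc (code M z n u) (firstHit M z n (dyadicCell z (code M z n u)) u)

variable {M : U → Set V} {z : ℕ → V}

lemma measurable_firstHit [MeasurableSpace U]
    (hM : ∀ K, IsClosed K → MeasurableSet {u | (M u ∩ K).Nonempty}) (n : ℕ) {K : Set V}
    (hK : IsClosed K) : Measurable (firstHit M z n K) :=
  measurable_sInf_nat fun _ => hM _ (hK.inter isClosed_closedBall)

lemma measurable_code [MeasurableSpace U]
    (hM : ∀ K, IsClosed K → MeasurableSet {u | (M u ∩ K).Nonempty}) : ∀ n, Measurable (code M z n)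
  | 0 => measurable_const' fun _ _ => funext fun i => i.elim0
  | n + 1 => by
    have hstep : ∀ σ : Fin n → ℕ, Measurable fun u =>
        (Fin.snoc σ (firstHit M z n (dyadicCell z σ) u) : Fin (n + 1) → ℕ) :=
      fun σ => (measurable_from_nat (f := fun i => (Fin.snoc σ i : Fin (n + 1) → ℕ))).comp
        (measurable_firstHit hM n (isClosed_dyadicCell z σ))
    exact (measurable_from_prod_countable_left (f := fun p : U × (Fin n → ℕ) =>
      (Fin.snoc p.2 (firstHit M z n (dyadicCell z p.2) p.1) : Fin (n + 1) → ℕ)) hstep).comp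
      (measurable_id.prodMk (measurable_code hM n))

lemma code_succ_last (n : ℕ) (u : U) :
    code M z (n + 1) u (Fin.last n) = firstHit M z n (dyadicCell z (code M z n u)) u := by
  simp [code]

lemma dyadicCell_code_succ (n : ℕ) (u : U) :
    dyadicCell z (code M z (n + 1) u) =
      dyadicCell z (code M z n u) ∩
        closedBall (z (code M z (n + 1) u (Fin.last n))) ((1 / 2) ^ n) := by
  rw [code_succ_last, code, dyadicCell_snoc]

lemma inter_dyadicCell_code_nonempty (hne : ∀ u, (M u).Nonempty) (hz : DenseRange z) (u : U) :
    ∀ n, (M u ∩ dyadicCell z (code M z n u)).Nonempty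
  | 0 => by simpa [dyadicCell] using hne u
  | n + 1 => by
    rw [dyadicCell_code_succ, code_succ_last]
    refine Nat.sInf_mem (s := {i | (M u ∩ (_ ∩ closedBall (z i) _)).Nonempty}) ?_
    obtain ⟨v, hvM, hvK⟩ := inter_dyadicCell_code_nonempty hne hz u n
    obtain ⟨i, hi⟩ := denseRange_iff.1 hz v ((1 / 2) ^ n) (by positivity)
    exact ⟨i, v, hvM, hvK, mem_closedBall.2 hi.le⟩

end MeasurableSelection

open MeasurableSelection in
theorem exists_measurable_selection {U V : Type*} [MeasurableSpace U] [MetricSpace V]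
    [CompactSpace V] [Nonempty V] [MeasurableSpace V] [BorelSpace V] {M : U → Set V}
    (hclosed : ∀ u, IsClosed (M u)) (hne : ∀ u, (M u).Nonempty)
    (hM : ∀ K, IsClosed K → MeasurableSet {u | (M u ∩ K).Nonempty}) :
    ∃ φ : U → V, Measurable φ ∧ ∀ u, φ u ∈ M u := by
  obtain ⟨z, hz⟩ := TopologicalSpace.exists_dense_seq V
  have hlimit : ∀ u, (⋂ n, M u ∩ dyadicCell z (code M z n u)).Nonempty := fun u =>
    IsCompact.nonempty_iInter_of_sequence_nonempty_isCompact_isClosed _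
      (fun n => by rw [dyadicCell_code_succ]; exact inter_subset_inter_right _ inter_subset_left)
      (inter_dyadicCell_code_nonempty hne hz u)
      ((hclosed u).inter (isClosed_dyadicCell z _)).isCompact
      fun _ => (hclosed u).inter (isClosed_dyadicCell z _)
  choose φ hφ using hlimit
  have hcenter : ∀ u n, dist (z (code M z (n + 1) u (Fin.last n))) (φ u) ≤ (1 / 2) ^ n := by
    intro u n
    have := (mem_iInter.1 (hφ u) (n + 1)).2
    rw [dyadicCell_code_succ] at this
    exact mem_closedBall'.1 this.2
  refine ⟨φ,
    measurable_of_tendsto_metrizable (f := fun n u => z (code M z (n + 1) u (Fin.last n)))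
    (fun n => measurable_from_nat.comp ((measurable_pi_apply _).comp (measurable_code hM (n + 1))))
    (tendsto_pi_nhds.2 fun u => ?_), fun u => (mem_iInter.1 (hφ u) 0).1⟩
  exact tendsto_iff_dist_tendsto_zero.2 <| squeeze_zero (fun _ => dist_nonneg) (hcenter u)
    (tendsto_pow_atTop_nhds_zero_of_lt_one (by norm_num) (by norm_num))

theorem stmt_6 {U V : Type*} [MetricSpace U] [MetricSpace V] [CompactSpace V] [Nonempty V]
    [MeasurableSpace U] [BorelSpace U] [MeasurableSpace V] [BorelSpace V]
    (F : U × V → ℝ) (hF : UpperSemicontinuous F) (C : ℝ) (hbdd : ∀ p, |F p| ≤ C) :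
    (UpperSemicontinuous fun u => ⨆ v, F (u, v)) ∧
    (∀ u, |⨆ v, F (u, v)| ≤ C) ∧
    ∃ φ : U → V, Measurable φ ∧ ∀ u, F (u, φ u) = ⨆ v, F (u, v) := by
  have hsup : ∀ u, ⨆ v, F (u, v) = sectionSup F univ u := fun u => by
    rw [sectionSup, image_univ]; rfl
  have hmax : ∀ u, ∃ v ∈ univ, IsMaxOn (fun v => F (u, v)) univ v :=
    hF.exists_isMaxOn_section isCompact_univ univ_nonempty
  simp only [hsup]
  refine ⟨hF.upperSemicontinuous_sectionSup isCompact_univ univ_nonempty, fun u => ?_, ?_⟩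
  · obtain ⟨v, hv, hvmax⟩ := hmax u
    exact hvmax.sectionSup_eq hv ▸ hbdd (u, v)
  obtain ⟨φ, hφ, hφmax⟩ := exists_measurable_selection
    (fun u => (hF.comp (Continuous.prodMk_right u)).isClosed_preimage (sectionSup F univ u))
    (fun u => (hmax u).elim fun v ⟨hv, hvmax⟩ => ⟨v, (hvmax.sectionSup_eq hv).le⟩)
    (fun K hK => hF.measurableSet_argmax_inter_nonempty hK)
  exact ⟨φ, hφ, fun u => le_antisymm (hF.le_sectionSup isCompact_univ u (mem_univ _)) (hφmax u)⟩
end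

section
/- Let E, A be metric spaces, λ a transition kernel from E × A to E with sup_{x,a} λ(x,a,E) < ∞ which is Feller (i.e. (x,a) ↦ ∫_E φ(y) λ(x,a,dy) is continuous for each φ ∈ C_b(E)). Let ṽ : [0,T] × E → ℝ be bounded and lower semicontinuous. Then the map (t,x,a) ↦ ∫_E ṽ(t,y) λ(x,a,dy) is bounded and lower semicontinuous on [0,T] × E × A. -/
/-!
A bounded lower semicontinuous `v` is the increasing pointwise limit of its Pasch–Hausdorff
envelopes `u n p = ⨅ q, v q + n * dist p q`, which are bounded and `n`-Lipschitz. For fixed `n`,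
the integral of `u n (t, ·)` against `k x a` is continuous in `(x, a)` by the Feller property and
Lipschitz in `t` uniformly in `(x, a)` because the masses are bounded, hence jointly continuous.
By monotone convergence the integral of `v (t, ·)` is the increasing limit of these continuous
functions, hence lower semicontinuous.
-/

open MeasureTheory Filter Topology Set
open scoped NNReal

section PaschHausdorff

variable {X : Type*} [PseudoMetricSpace X] {v : X → ℝ} {m : ℝ}

/-- For `v` bounded below, the largest `n`-Lipschitz function below `v`. -/
noncomputable def paschHausdorff (v : X → ℝ) (n : ℕ) (p : X) : ℝ :=
  ⨅ q, v q + n * dist p q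

lemma paschHausdorff_le_add (hv : ∀ q, m ≤ v q) (n : ℕ) (p q : X) :
    paschHausdorff v n p ≤ v q + n * dist p q :=
  ciInf_le ⟨m, by rintro _ ⟨q, rfl⟩; exact le_add_of_le_of_nonneg (hv q) (by positivity)⟩ q

lemma paschHausdorff_le (hv : ∀ q, m ≤ v q) (n : ℕ) (p : X) : paschHausdorff v n p ≤ v p := by
  simpa using paschHausdorff_le_add hv n p p

lemma le_paschHausdorff {c : ℝ} {n : ℕ} {p : X} (h : ∀ q, c ≤ v q + n * dist p q) :
    c ≤ paschHausdorff v n p :=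
  have : Nonempty X := ⟨p⟩
  le_ciInf h

lemma le_paschHausdorff_of_le (hv : ∀ q, m ≤ v q) (n : ℕ) (p : X) : m ≤ paschHausdorff v n p :=
  le_paschHausdorff fun q => le_add_of_le_of_nonneg (hv q) (by positivity)

lemma lipschitzWith_paschHausdorff (hv : ∀ q, m ≤ v q) (n : ℕ) :
    LipschitzWith n (paschHausdorff v n) :=
  LipschitzWith.of_le_add_mul n fun p p' => by
    rw [NNReal.coe_natCast, ← sub_le_iff_le_add]
    refine le_paschHausdorff fun q => ?_
    have := paschHausdorff_le_add hv n p q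
    have := mul_le_mul_of_nonneg_left (dist_triangle p p' q) n.cast_nonneg
    linarith

lemma monotone_paschHausdorff (hv : ∀ q, m ≤ v q) (p : X) :
    Monotone (paschHausdorff v · p) := fun n n' hn =>
  le_paschHausdorff fun q => (paschHausdorff_le_add hv n p q).trans <| by gcongr

lemma tendsto_paschHausdorff (hv : ∀ q, m ≤ v q) {p : X} (hlsc : LowerSemicontinuousAt v p) :
    Tendsto (paschHausdorff v · p) atTop (𝓝 (v p)) := by
  refine tendsto_order.2 ⟨fun a ha => ?_,
    fun b hb => .of_forall fun n => (paschHausdorff_le hv n p).trans_lt hb⟩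
  obtain ⟨a', haa', ha'⟩ := exists_between ha
  obtain ⟨δ, hδ, hball⟩ := Metric.eventually_nhds_iff.1 (hlsc a' ha')
  obtain ⟨N, hNδ⟩ := exists_nat_ge ((a' - m) / δ)
  -- near `p` we have `a' < v q`; away from `p` the penalty `N * dist p q` exceeds `a' - m`
  have hN : a' ≤ paschHausdorff v N p := le_paschHausdorff fun q => by
    rcases lt_or_ge (dist q p) δ with hq | hq
    · exact le_add_of_le_of_nonneg (hball hq).le (by positivity)
    · rw [div_le_iff₀ hδ] at hNδ
      have := hv q
      rw [dist_comm] at hq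
      nlinarith
  exact eventually_atTop.2
    ⟨N, fun n hn => haa'.trans_le (hN.trans (monotone_paschHausdorff hv p hn))⟩

end PaschHausdorff

lemma lowerSemicontinuous_of_tendsto_monotone {X β : Type*} [TopologicalSpace X] [LinearOrder β]
    [TopologicalSpace β] [OrderTopology β] {g : ℕ → X → β} {G : X → β}
    (hg : ∀ n, LowerSemicontinuous (g n)) (hmono : ∀ x, Monotone (g · x))
    (hG : ∀ x, Tendsto (g · x) atTop (𝓝 (G x))) : LowerSemicontinuous G := fun x c hc => by
  obtain ⟨n, hn⟩ := ((hG x).eventually (lt_mem_nhds hc)).exists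
  filter_upwards [hg n x c hn] with y hy using hy.trans_le ((hmono y).ge_of_tendsto (hG y) n)

section FiniteMassBound

variable {α : Type*} [MeasurableSpace α] {μ : Measure α} {M : ℝ≥0}

lemma integrable_of_abs_le (hμ : μ univ ≤ M) {f : α → ℝ} {C : ℝ}
    (hf : AEStronglyMeasurable f μ) (hC : ∀ y, |f y| ≤ C) : Integrable f μ :=
  have : IsFiniteMeasure μ := ⟨hμ.trans_lt ENNReal.coe_lt_top⟩
  .of_bound hf C (.of_forall hC)

lemma abs_integral_le_of_abs_le (hμ : μ univ ≤ M) {f : α → ℝ} {C : ℝ} (hC₀ : 0 ≤ C)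
    (hC : ∀ y, |f y| ≤ C) : |∫ y, f y ∂μ| ≤ C * M :=
  have : IsFiniteMeasure μ := ⟨hμ.trans_lt ENNReal.coe_lt_top⟩
  (norm_integral_le_of_norm_le_const (f := f) (.of_forall hC)).trans <|
    mul_le_mul_of_nonneg_left (ENNReal.toReal_le_coe_of_le_coe hμ) hC₀

lemma lipschitzWith_integral {T : Type*} [PseudoMetricSpace T] (hμ : μ univ ≤ M) {K : ℝ≥0}
    {f : T → α → ℝ} (hf : ∀ t, Integrable (f t) μ) (hK : ∀ y, LipschitzWith K (f · y)) :
    LipschitzWith (K * M) fun t => ∫ y, f t y ∂μ :=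
  LipschitzWith.of_dist_le_mul fun t t' => by
    rw [Real.dist_eq, ← integral_sub (hf t) (hf t'), NNReal.coe_mul, mul_right_comm]
    exact abs_integral_le_of_abs_le hμ (by positivity) fun y => (hK y).dist_le_mul t t'

end FiniteMassBound

section Feller

variable {T E P : Type*} [PseudoMetricSpace T] [PseudoMetricSpace E] [MeasurableSpace E]
  [OpensMeasurableSpace E] [TopologicalSpace P] {κ : P → Measure E} {M : ℝ≥0}

lemma continuous_integral_of_feller (hmass : ∀ p, κ p univ ≤ M)
    (hFeller : ∀ φ : E → ℝ, Continuous φ → (∃ C, ∀ y, |φ y| ≤ C) →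
      Continuous fun p => ∫ y, φ y ∂κ p)
    {f : T → E → ℝ} {C : ℝ} {K : ℝ≥0} (hcont : ∀ t, Continuous (f t))
    (hbdd : ∀ t y, |f t y| ≤ C) (hK : ∀ y, LipschitzWith K (f · y)) :
    Continuous fun q : T × P => ∫ y, f q.1 y ∂κ q.2 :=
  continuous_prod_of_continuous_lipschitzWith _ (K * M)
    (fun t => hFeller _ (hcont t) ⟨C, hbdd t⟩)
    (fun p => lipschitzWith_integral (hmass p)
      (fun t => integrable_of_abs_le (hmass p) (hcont t).aestronglyMeasurable (hbdd t)) hK)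

theorem lowerSemicontinuous_integral_of_feller (hmass : ∀ p, κ p univ ≤ M)
    (hFeller : ∀ φ : E → ℝ, Continuous φ → (∃ C, ∀ y, |φ y| ≤ C) →
      Continuous fun p => ∫ y, φ y ∂κ p)
    {v : T × E → ℝ} {C : ℝ} (hlsc : LowerSemicontinuous v) (hbdd : ∀ q, |v q| ≤ C) :
    LowerSemicontinuous fun q : T × P => ∫ y, v (q.1, y) ∂κ q.2 := by
  have hv : ∀ q, -C ≤ v q := fun q => neg_le_of_abs_le (hbdd q)
  set u := paschHausdorff v
  have hu_lip (n : ℕ) : LipschitzWith n (u n) := lipschitzWith_paschHausdorff hv n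
  have hu_abs (n : ℕ) (q : T × E) : |u n q| ≤ C := abs_le.2
    ⟨le_paschHausdorff_of_le hv n q, (paschHausdorff_le hv n q).trans (le_of_abs_le (hbdd q))⟩
  have hu_cont (n : ℕ) (t : T) : Continuous fun y => u n (t, y) :=
    (hu_lip n).continuous.comp (Continuous.prodMk_right t)
  have hu_int (n : ℕ) (t : T) (p : P) : Integrable (fun y => u n (t, y)) (κ p) :=
    integrable_of_abs_le (hmass p) (hu_cont n t).aestronglyMeasurable fun y => hu_abs n (t, y)
  have hv_int (t : T) (p : P) : Integrable (fun y => v (t, y)) (κ p) :=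
    integrable_of_abs_le (hmass p)
      (hlsc.comp (Continuous.prodMk_right t)).measurable.aestronglyMeasurable
      fun y => hbdd (t, y)
  refine lowerSemicontinuous_of_tendsto_monotone
    (g := fun n q => ∫ y, u n (q.1, y) ∂κ q.2) (fun n => ?_) (fun q n n' hn => ?_) fun q => ?_
  · exact (continuous_integral_of_feller hmass hFeller (hu_cont n) (fun t y => hu_abs n (t, y))
      fun y => mul_one (n : ℝ≥0) ▸ (hu_lip n).comp (.prodMk_right y)).lowerSemicontinuous
  · exact integral_mono (hu_int n _ _) (hu_int n' _ _)
      fun y => monotone_paschHausdorff hv _ hn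
  · exact integral_tendsto_of_tendsto_of_monotone (hu_int · _ _) (hv_int _ _)
      (.of_forall fun y => monotone_paschHausdorff hv _)
      (.of_forall fun y => tendsto_paschHausdorff hv (hlsc _))

end Feller

theorem stmt_8 {E A : Type*} [MetricSpace E] [MetricSpace A]
    [MeasurableSpace E] [BorelSpace E]
    (k : E → A → Measure E) (Λ : ℝ)
    (hmass : ∀ x a, k x a Set.univ ≤ ENNReal.ofReal Λ)
    (hFeller : ∀ φ : E → ℝ, Continuous φ → (∃ M, ∀ y, |φ y| ≤ M) →
      Continuous fun p : E × A => ∫ y, φ y ∂ k p.1 p.2)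
    (T : ℝ) (v : Set.Icc (0:ℝ) T × E → ℝ) (C : ℝ)
    (hlsc : LowerSemicontinuous v) (hbdd : ∀ p, |v p| ≤ C) :
    (LowerSemicontinuous fun p : Set.Icc (0:ℝ) T × E × A =>
      ∫ y, v (p.1, y) ∂ k p.2.1 p.2.2) ∧
    ∃ C' : ℝ, ∀ p : Set.Icc (0:ℝ) T × E × A,
      |∫ y, v (p.1, y) ∂ k p.2.1 p.2.2| ≤ C' := by
  have hmass' (p : E × A) : k p.1 p.2 univ ≤ Λ.toNNReal := hmass p.1 p.2
  refine ⟨lowerSemicontinuous_integral_of_feller hmass' hFeller hlsc hbdd,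
    C * Λ.toNNReal, fun ⟨t, x, a⟩ => ?_⟩
  exact abs_integral_le_of_abs_le (hmass x a) ((abs_nonneg _).trans (hbdd (t, x)))
    fun y => hbdd (t, y)
end
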